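/- arXiv:1512.07079 — 4 statements merged into one kernel-verified Lean document; each statement's English description precedes it below -/
import Mathlib

section
/- Let t ≥ 1 and let j_1 > j_2 > … > j_t ≥ 0 be integers, and set s = 2^{j_1} + 2^{j_2} + … + 2^{j_t}. Let f : ℝ → ℂ be a measurable function such that |f|^{2^{j_i + i}} is integrable on [0,1] for each 1 ≤ i ≤ t. Then ∫_0^1 |f(x)|^s dx ≤ ( ∏_{i=1}^{t−1} ( ∫_0^1 |f(x)|^{2^{j_i + i}} dx )^{1/2^i} ) · ( ∫_0^1 |f(x)|^{2^{j_t + t}} dx )^{1/2^t}. -/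
/-!
Write `s = 2^{j_1} + s'`. Cauchy–Schwarz applied to `g^{2^{j_1}} · g^{s'}` gives
`∫ g^s ≤ (∫ g^{2^{j_1+1}})^{1/2} (∫ g^{2s'})^{1/2}`, and `2s' = 2^{j_2+1} + ⋯ + 2^{j_t+1}` has
the same shape, so the bound follows by induction on `t`, each step halving the outer exponents.
On lower Lebesgue integrals with values in `ℝ≥0∞` the induction needs no integrability side
conditions; finiteness of the integrals on the right is needed only to pass back to real
integrals, as `ENNReal.toReal ∞ = 0`.
-/

open Finset MeasureTheory

open scoped ENNReal

section
variable {α : Type*} [MeasurableSpace α] {μ : Measure α} {g : α → ℝ≥0∞}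

theorem lintegral_pow_add_le (hg : AEMeasurable g μ) (a b : ℕ) :
    ∫⁻ x, g x ^ (a + b) ∂μ ≤
      (∫⁻ x, g x ^ (2 * a) ∂μ) ^ (1 / 2 : ℝ) * (∫⁻ x, g x ^ (2 * b) ∂μ) ^ (1 / 2 : ℝ) := by
  simpa [pow_add, pow_mul', ENNReal.rpow_two] using
    ENNReal.lintegral_mul_le_Lp_mul_Lq μ Real.HolderConjugate.two_two (hg.pow_const a)
      (hg.pow_const b)

theorem lintegral_pow_sum_two_pow_le (hg : AEMeasurable g μ) (t : ℕ) (j : ℕ → ℕ) :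
    ∫⁻ x, g x ^ (∑ i ∈ range t, 2 ^ j i) ∂μ ≤
      (∏ i ∈ range t, (∫⁻ x, g x ^ 2 ^ (j i + (i + 1)) ∂μ) ^ (1 / 2 ^ (i + 1) : ℝ)) *
        μ Set.univ ^ (1 / 2 ^ t : ℝ) := by
  induction t generalizing j with
  | zero => simp
  | succ t ih =>
    have ih' := ih (fun i => j (i + 1) + 1)
    calc ∫⁻ x, g x ^ (∑ i ∈ range (t + 1), 2 ^ j i) ∂μ
        = ∫⁻ x, g x ^ (2 ^ j 0 + ∑ i ∈ range t, 2 ^ j (i + 1)) ∂μ := by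
          rw [sum_range_succ', add_comm]
      _ ≤ (∫⁻ x, g x ^ (2 * 2 ^ j 0) ∂μ) ^ (1 / 2 : ℝ) *
            (∫⁻ x, g x ^ (2 * ∑ i ∈ range t, 2 ^ j (i + 1)) ∂μ) ^ (1 / 2 : ℝ) :=
          lintegral_pow_add_le hg _ _
      _ = (∫⁻ x, g x ^ 2 ^ (j 0 + 1) ∂μ) ^ (1 / 2 : ℝ) *
            (∫⁻ x, g x ^ (∑ i ∈ range t, 2 ^ (j (i + 1) + 1)) ∂μ) ^ (1 / 2 : ℝ) := by
          simp only [mul_sum, pow_succ']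
      _ ≤ (∫⁻ x, g x ^ 2 ^ (j 0 + 1) ∂μ) ^ (1 / 2 : ℝ) *
            ((∏ i ∈ range t,
              (∫⁻ x, g x ^ 2 ^ (j (i + 1) + 1 + (i + 1)) ∂μ) ^ (1 / 2 ^ (i + 1) : ℝ)) *
                μ Set.univ ^ (1 / 2 ^ t : ℝ)) ^ (1 / 2 : ℝ) := by
          gcongr
      _ = _ := by
          rw [ENNReal.mul_rpow_of_nonneg _ _ (by norm_num),
            ← ENNReal.prod_rpow_of_nonneg (by norm_num), prod_range_succ', ← mul_assoc,
            mul_comm _ (_ ^ _)]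
          have half_mul (k : ℕ) : (1 / 2 ^ k * (1 / 2) : ℝ) = 1 / 2 ^ (k + 1) := by ring
          simp only [← ENNReal.rpow_mul, half_mul, add_right_comm _ 1, ← add_assoc, zero_add,
            pow_one]
          ring
end

theorem integral_norm_pow_eq_toReal_lintegral {α E : Type*} [MeasurableSpace α] {μ : Measure α}
    [NormedAddCommGroup E] {f : α → E} (hf : AEStronglyMeasurable f μ) (n : ℕ) :
    ∫ x, ‖f x‖ ^ n ∂μ = (∫⁻ x, ‖f x‖ₑ ^ n ∂μ).toReal := by
  simpa using integral_norm_eq_lintegral_enorm (hf.norm.pow n)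

/-- The paper's index `i ∈ {1, …, t}` is `i - 1 ∈ {0, …, t-1}` here, so its exponent
`2^{j_i + i}` reads `2 ^ (j i + (i + 1))`. -/
theorem stmt_7_general (t : ℕ) (ht : 1 ≤ t) (j : ℕ → ℕ)
    (s : ℕ) (hs : s = ∑ i ∈ Finset.range t, 2 ^ j i)
    (f : ℝ → ℂ) (hf : Measurable f)
    (hint : ∀ i < t,
      IntervalIntegrable (fun x => ‖f x‖ ^ (2 ^ (j i + (i + 1)))) volume 0 1) :
    (∫ x in (0:ℝ)..1, ‖f x‖ ^ s) ≤
      (∏ i ∈ Finset.range (t - 1),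
          (∫ x in (0:ℝ)..1, ‖f x‖ ^ (2 ^ (j i + (i + 1)))) ^ ((1 : ℝ) / 2 ^ (i + 1))) *
        (∫ x in (0:ℝ)..1, ‖f x‖ ^ (2 ^ (j (t - 1) + t))) ^ ((1 : ℝ) / 2 ^ t) := by
  subst hs
  obtain ⟨u, rfl⟩ := Nat.exists_eq_add_of_le' ht
  have key := lintegral_pow_sum_two_pow_le (μ := volume.restrict (Set.Ioc 0 1))
    hf.enorm.aemeasurable (u + 1) j
  rw [Measure.restrict_apply_univ, Real.volume_Ioc, sub_zero, ENNReal.ofReal_one,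
    ENNReal.one_rpow, mul_one, prod_range_succ] at key
  have hfin : ∀ i < u + 1, ∫⁻ x in Set.Ioc 0 1, ‖f x‖ₑ ^ 2 ^ (j i + (i + 1)) ≠ ⊤ := fun i hi => by
    simpa using ((hint i hi).1).hasFiniteIntegral.ne
  simp only [intervalIntegral.integral_of_le zero_le_one,
    integral_norm_pow_eq_toReal_lintegral hf.aestronglyMeasurable, ENNReal.toReal_rpow,
    ← ENNReal.toReal_prod, ← ENNReal.toReal_mul, Nat.add_sub_cancel]
  refine ENNReal.toReal_mono (ENNReal.mul_ne_top (ENNReal.prod_ne_top fun i hi => ?_) ?_) key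
  · exact ENNReal.rpow_ne_top_of_nonneg (by positivity)
      (hfin i ((mem_range.mp hi).trans u.lt_succ_self))
  · exact ENNReal.rpow_ne_top_of_nonneg (by positivity) (hfin u u.lt_succ_self)

/-- `j 0 > j 1 > ⋯ > j (t-1) ≥ 0` are the (0-indexed) exponents
`j_1 > ⋯ > j_t` of the binary expansion `s = 2^{j_1} + ⋯ + 2^{j_t}`.  The paper's
index `i ∈ {1, …, t}` corresponds to the Lean index `i - 1 ∈ {0, …, t-1}`, so the
paper's exponent `2^{j_i + i}` is `2^(j i + (i+1))` here. -/
theorem stmt_7 (t : ℕ) (ht : 1 ≤ t) (j : ℕ → ℕ)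
    (hj : ∀ i, i + 1 < t → j (i + 1) < j i)
    (s : ℕ) (hs : s = ∑ i ∈ Finset.range t, 2 ^ j i)
    (f : ℝ → ℂ) (hf : Measurable f)
    (hint : ∀ i < t,
      IntervalIntegrable (fun x => ‖f x‖ ^ (2 ^ (j i + (i + 1)))) volume 0 1) :
    (∫ x in (0:ℝ)..1, ‖f x‖ ^ s) ≤
      (∏ i ∈ Finset.range (t - 1),
          (∫ x in (0:ℝ)..1, ‖f x‖ ^ (2 ^ (j i + (i + 1)))) ^ ((1 : ℝ) / 2 ^ (i + 1))) *
        (∫ x in (0:ℝ)..1, ‖f x‖ ^ (2 ^ (j (t - 1) + t))) ^ ((1 : ℝ) / 2 ^ t) :=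
  stmt_7_general t ht j s hs f hf hint
end

section
/- Let k_1 and k_2 be positive integers. For n ≥ 1 let R⁺(n) denote the number of pairs of positive integers (x_1, x_2) with x_1^{k_1} + x_2^{k_2} = n. Then for every ε > 0 there exists a constant C > 0 such that for all n ≥ 1, R⁺(n) ≤ C · n^{ (1/2)(1/k_1 + 1/k_2) + ε }. -/
/-!
The first coordinate of a solution determines the second and satisfies `x₁ ≤ n ^ (1/k₁)`, so
`R⁺(n) ≤ n ^ (1/k₁)`; by symmetry also `R⁺(n) ≤ n ^ (1/k₂)`. The smaller of two positive numbers
is at most their geometric mean, which gives `R⁺(n) ≤ n ^ ((1/k₁ + 1/k₂)/2)`, and for `n ≥ 1` the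
extra `ε` in the exponent only enlarges the bound.
-/

def posReps (k₁ k₂ n : ℕ) : Set (ℕ × ℕ) :=
  {p | 0 < p.1 ∧ 0 < p.2 ∧ p.1 ^ k₁ + p.2 ^ k₂ = n}

lemma swap_image_posReps (k₁ k₂ n : ℕ) :
    Prod.swap '' posReps k₁ k₂ n = posReps k₂ k₁ n := by
  ext ⟨a, b⟩
  simp only [Set.image_swap_eq_preimage_swap, Set.mem_preimage, Prod.swap_prod_mk, posReps,
    Set.mem_ofPred_eq]
  omega

lemma ncard_posReps_comm (k₁ k₂ n : ℕ) :
    (posReps k₁ k₂ n).ncard = (posReps k₂ k₁ n).ncard := by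
  rw [← swap_image_posReps, Set.ncard_image_of_injective _ Prod.swap_injective]

lemma injOn_fst_posReps {k₂ : ℕ} (hk₂ : 0 < k₂) (k₁ n : ℕ) :
    Set.InjOn Prod.fst (posReps k₁ k₂ n) := by
  rintro ⟨a, b⟩ ⟨-, -, hab⟩ ⟨a', b'⟩ ⟨-, -, hab'⟩ (rfl : a = a')
  dsimp only at hab hab'
  have hb : b ^ k₂ = b' ^ k₂ := by omega
  rw [Nat.pow_left_injective hk₂.ne' hb]

lemma natCast_le_rpow_one_div_of_pow_le {a k n : ℕ} (hk : 0 < k) (h : a ^ k ≤ n) :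
    (a : ℝ) ≤ (n : ℝ) ^ (1 / (k : ℝ)) := by
  rw [one_div, Real.le_rpow_inv_iff_of_pos (by positivity) (by positivity) (by positivity),
    Real.rpow_natCast]
  exact_mod_cast h

lemma ncard_posReps_le_rpow {k₁ k₂ : ℕ} (hk₁ : 0 < k₁) (hk₂ : 0 < k₂) (n : ℕ) :
    ((posReps k₁ k₂ n).ncard : ℝ) ≤ (n : ℝ) ^ (1 / (k₁ : ℝ)) := by
  set M := ⌊(n : ℝ) ^ (1 / (k₁ : ℝ))⌋₊
  have hfst_mem : ∀ p ∈ posReps k₁ k₂ n, p.1 ∈ (Finset.Icc 1 M : Set ℕ) := by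
    rintro ⟨a, b⟩ ⟨ha, -, hab⟩
    exact Finset.mem_Icc.2
      ⟨ha, Nat.le_floor (natCast_le_rpow_one_div_of_pow_le hk₁ (by omega))⟩
  have hcard : (posReps k₁ k₂ n).ncard ≤ M := by
    calc (posReps k₁ k₂ n).ncard ≤ (Finset.Icc 1 M : Set ℕ).ncard :=
          Set.ncard_le_ncard_of_injOn Prod.fst hfst_mem (injOn_fst_posReps hk₂ k₁ n)
      _ = M := by rw [Set.ncard_coe_finset, Nat.card_Icc, Nat.add_sub_cancel]
  calc ((posReps k₁ k₂ n).ncard : ℝ) ≤ M := by exact_mod_cast hcard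
    _ ≤ (n : ℝ) ^ (1 / (k₁ : ℝ)) := Nat.floor_le (by positivity)

lemma le_rpow_half_mul_add_of_le_rpow {x y a b : ℝ} (hy : 0 < y) (hx : 0 ≤ x)
    (ha : x ≤ y ^ a) (hb : x ≤ y ^ b) : x ≤ y ^ (1 / 2 * (a + b)) := by
  have hsq : (y ^ (1 / 2 * (a + b))) ^ 2 = y ^ a * y ^ b := by
    rw [← Real.rpow_natCast, ← Real.rpow_mul hy.le, ← Real.rpow_add hy]
    ring_nf
  refine (pow_le_pow_iff_left₀ hx (by positivity) two_ne_zero).1 ?_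
  rw [hsq, sq]
  exact mul_le_mul ha hb hx (by positivity)

theorem stmt_13 (k₁ k₂ : ℕ) (hk₁ : 0 < k₁) (hk₂ : 0 < k₂) :
    ∀ ε : ℝ, 0 < ε → ∃ C : ℝ, 0 < C ∧ ∀ n : ℕ, 1 ≤ n →
      (({p : ℕ × ℕ | 0 < p.1 ∧ 0 < p.2 ∧ p.1 ^ k₁ + p.2 ^ k₂ = n}.ncard : ℝ)) ≤
        C * (n : ℝ) ^ ((1 / 2) * (1 / (k₁ : ℝ) + 1 / (k₂ : ℝ)) + ε) := by
  intro ε hε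
  refine ⟨1, one_pos, fun n hn => ?_⟩
  have hn' : (1 : ℝ) ≤ n := by exact_mod_cast hn
  have h₁ := ncard_posReps_le_rpow hk₁ hk₂ n
  have h₂ := ncard_posReps_le_rpow hk₂ hk₁ n
  rw [← ncard_posReps_comm] at h₂
  calc ((posReps k₁ k₂ n).ncard : ℝ)
      ≤ (n : ℝ) ^ ((1 / 2) * (1 / (k₁ : ℝ) + 1 / (k₂ : ℝ))) :=
        le_rpow_half_mul_add_of_le_rpow (by positivity) (by positivity) h₁ h₂
    _ ≤ 1 * (n : ℝ) ^ ((1 / 2) * (1 / (k₁ : ℝ) + 1 / (k₂ : ℝ)) + ε) := by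
        rw [one_mul]
        exact Real.rpow_le_rpow_of_exponent_le hn' (by linarith)
end

section
/- Let k_1, k_2, k_3 be positive integers with k_1 ≥ 2 and k_2 ≥ 2. For n ≥ 1 let R⁺(n) denote the number of triples of positive integers (x_1, x_2, x_3) with x_1^{k_1} + x_2^{k_2} + x_3^{k_3} = n. Then for every ε > 0 there exists a constant C > 0 such that for all n ≥ 1, R⁺(n) ≤ C · n^{ (1/2)(1/k_1 + 1/k_2 + 1/k_3) + ε }. -/
/-!
Let `r(m)` count the representations `m = x ^ k₁ + y ^ k₂` with `x, y ≥ 1`. Then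
`R⁺(n) = ∑_{z ^ k₃ ≤ n} r(n - z ^ k₃)`, and Cauchy–Schwarz gives
`R⁺(n) ^ 2 ≤ n ^ (1/k₃) · ∑_{m ≤ n} r(m) ^ 2`. The last sum counts the solutions of
`a ^ k₁ + b ^ k₂ = c ^ k₁ + d ^ k₂ ≤ n`. When `b = d` we get `a = c`, so there are at most
`n ^ (1/k₁ + 1/k₂)` such solutions. For fixed `b ≠ d` the difference `a - c` divides
`|d ^ k₂ - b ^ k₂|` and, since `k₁ ≥ 2`, it determines `(a, c)`. So the divisor bound
`τ(m) ≪ m ^ δ` gives `≪ n ^ (2/k₂ + δ)` solutions. By symmetry we may take `k₁ ≤ k₂`, and then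
`∑_{m ≤ n} r(m) ^ 2 ≪ n ^ (1/k₁ + 1/k₂ + δ)`.
-/

open Finset

lemma sq_sum_comp_le_card_mul_sum_sq {ι κ : Type*} {s : Finset ι} {t : Finset κ} {g : ι → κ}
    (hg : Set.InjOn g s) (hst : ∀ i ∈ s, g i ∈ t) (f : κ → ℝ) :
    (∑ i ∈ s, f (g i)) ^ 2 ≤ #s * ∑ m ∈ t, f m ^ 2 := by
  classical
  refine sq_sum_le_card_mul_sum_sq.trans (mul_le_mul_of_nonneg_left ?_ (by positivity))
  rw [← sum_image (f := fun m => f m ^ 2) hg]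
  exact sum_le_sum_of_subset_of_nonneg (image_subset_iff.2 hst) fun _ _ _ => sq_nonneg _

lemma sum_sq_card_filter_eq_card_filter_product {α β : Type*} [DecidableEq β] (s : Finset α)
    (f : α → β) (t : Finset β) :
    ∑ b ∈ t, #{a ∈ s | f a = b} ^ 2 = #{q ∈ s ×ˢ s | f q.1 = f q.2 ∧ f q.1 ∈ t} := by
  rw [card_eq_sum_card_fiberwise (f := fun q => f q.1) (t := t) fun q hq => (mem_filter.1 hq).2.2]
  refine sum_congr rfl fun b hb => ?_
  rw [sq, ← card_product]
  congr 1
  ext q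
  simp only [mem_filter, mem_product]
  grind

lemma card_filter_pow_le_le_rpow {k : ℕ} (hk : k ≠ 0) (N m : ℕ) :
    (#{x ∈ Icc 1 N | x ^ k ≤ m} : ℝ) ≤ (m : ℝ) ^ (k : ℝ)⁻¹ := by
  have hsub : {x ∈ Icc 1 N | x ^ k ≤ m} ⊆ Icc 1 ⌊(m : ℝ) ^ (k : ℝ)⁻¹⌋₊ := by
    intro x hx
    rw [mem_filter, mem_Icc] at hx
    refine mem_Icc.2 ⟨hx.1.1, Nat.le_floor ?_⟩
    rw [Real.le_rpow_inv_iff_of_pos (by positivity) (by positivity) (by positivity)]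
    exact_mod_cast hx.2
  calc (#{x ∈ Icc 1 N | x ^ k ≤ m} : ℝ) ≤ #(Icc 1 ⌊(m : ℝ) ^ (k : ℝ)⁻¹⌋₊) := by
        exact_mod_cast card_le_card hsub
    _ ≤ (m : ℝ) ^ (k : ℝ)⁻¹ := by
        rw [Nat.card_Icc, Nat.add_sub_cancel]
        exact Nat.floor_le (by positivity)

def IsDivisorBound (C δ : ℝ) : Prop :=
  ∀ d : ℕ, (#d.divisors : ℝ) ≤ C * (d : ℝ) ^ δ

lemma IsDivisorBound.nonneg {C δ : ℝ} (hC : IsDivisorBound C δ) : 0 ≤ C :=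
  zero_le_one.trans (by simpa using hC 1)

lemma exists_add_one_le_mul_pow_rpow {δ : ℝ} (hδ : 0 < δ) :
    ∃ B : ℝ, 1 ≤ B ∧ ∀ x : ℝ, 2 ≤ x → ∀ a : ℕ, (a + 1 : ℝ) ≤ B * (x ^ a) ^ δ := by
  have ht : 0 < δ * Real.log 2 := mul_pos hδ (Real.log_pos one_lt_two)
  refine ⟨1 + (δ * Real.log 2)⁻¹, le_add_of_nonneg_right (inv_pos.2 ht).le, fun x hx a => ?_⟩
  calc (a + 1 : ℝ)
      ≤ (1 + (δ * Real.log 2)⁻¹) * (a * (δ * Real.log 2) + 1) := by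
        have : (δ * Real.log 2)⁻¹ * (δ * Real.log 2) = 1 := inv_mul_cancel₀ ht.ne'
        nlinarith [inv_pos.2 ht, a.cast_nonneg (α := ℝ)]
    _ ≤ (1 + (δ * Real.log 2)⁻¹) * (2 : ℝ) ^ (a * δ) := by
        rw [Real.rpow_def_of_pos two_pos, ← mul_assoc, mul_comm (Real.log 2)]
        gcongr
        exact Real.add_one_le_exp _
    _ ≤ (1 + (δ * Real.log 2)⁻¹) * (x ^ a) ^ δ := by
        rw [← Real.rpow_natCast_mul (by linarith)]
        gcongr

lemma add_one_le_pow_rpow {δ x : ℝ} (hx : 0 ≤ x) (h : 2 ≤ x ^ δ) (a : ℕ) :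
    (a + 1 : ℝ) ≤ (x ^ a) ^ δ := by
  calc (a + 1 : ℝ) ≤ 2 ^ a := by exact_mod_cast Nat.lt_two_pow_self
    _ ≤ (x ^ δ) ^ a := by gcongr
    _ = (x ^ a) ^ δ := by rw [← Real.rpow_mul_natCast hx, mul_comm, Real.rpow_natCast_mul hx]

theorem exists_isDivisorBound {δ : ℝ} (hδ : 0 < δ) : ∃ C : ℝ, IsDivisorBound C δ := by
  obtain ⟨B, hB, hsmall⟩ := exists_add_one_le_mul_pow_rpow hδ
  -- Primes `p ≥ M` have `p ^ δ ≥ 2`; only the prime factors below `M` cost a factor `B`.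
  set M := ⌈(2 : ℝ) ^ δ⁻¹⌉₊
  refine ⟨B ^ M, fun d => ?_⟩
  rcases eq_or_ne d 0 with rfl | hd
  · simp [Real.zero_rpow hδ.ne']
  have hfactor : ∀ p ∈ d.primeFactors, ((d.factorization p + 1 : ℕ) : ℝ) ≤
      (if p < M then B else 1) * ((p : ℝ) ^ d.factorization p) ^ δ := by
    intro p hp
    have hp2 : (2 : ℝ) ≤ p := by exact_mod_cast (Nat.prime_of_mem_primeFactors hp).two_le
    push_cast
    split_ifs with hpM
    · exact hsmall p hp2 _
    · rw [one_mul]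
      refine add_one_le_pow_rpow (by linarith) ?_ _
      calc (2 : ℝ) = ((2 : ℝ) ^ δ⁻¹) ^ δ := (Real.rpow_inv_rpow zero_le_two hδ.ne').symm
        _ ≤ (p : ℝ) ^ δ := by gcongr; exact Nat.ceil_le.1 (not_lt.1 hpM)
  calc (#d.divisors : ℝ)
      = ∏ p ∈ d.primeFactors, ((d.factorization p + 1 : ℕ) : ℝ) := by
        rw [Nat.card_divisors hd, Nat.cast_prod]
    _ ≤ ∏ p ∈ d.primeFactors, (if p < M then B else 1) * ((p : ℝ) ^ d.factorization p) ^ δ :=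
        prod_le_prod (fun _ _ => by positivity) hfactor
    _ = (∏ p ∈ d.primeFactors with p < M, B) * (d : ℝ) ^ δ := by
        rw [prod_mul_distrib, prod_filter, Real.finsetProd_rpow _ _ (fun _ _ => by positivity)]
        congr 2
        exact_mod_cast (Nat.prod_primeFactors_pow_factorization hd).symm
    _ ≤ B ^ M * (d : ℝ) ^ δ := by
        rw [prod_const]
        gcongr
        calc #{p ∈ d.primeFactors | p < M} ≤ #(range M) :=
            card_le_card fun p hp => mem_range.2 (mem_filter.1 hp).2
          _ = M := card_range M

lemma strictMono_add_pow_sub_pow {k e : ℕ} (hk : 2 ≤ k) (he : 0 < e) :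
    StrictMono fun c : ℕ => (c + e) ^ k - c ^ k := by
  intro c c' hc
  simp only
  rw [← geom_sum₂_mul_of_ge (Nat.le_add_right c e), ← geom_sum₂_mul_of_ge (Nat.le_add_right c' e),
    Nat.add_sub_cancel_left, Nat.add_sub_cancel_left]
  refine Nat.mul_lt_mul_of_pos_right
    (sum_lt_sum (fun i _ => by gcongr) ⟨k - 1, by simp; omega, ?_⟩) he
  simp only [Nat.sub_self, pow_zero, mul_one]
  exact Nat.pow_lt_pow_left (by omega) (by omega)

lemma card_filter_pow_add_eq_pow_add_le_card_divisors {k u v : ℕ} (hk : 2 ≤ k) (huv : u ≠ v)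
    (s : Finset (ℕ × ℕ)) : #{p ∈ s | p.1 ^ k + u = p.2 ^ k + v} ≤ #(Nat.dist u v).divisors := by
  wlog h : u < v generalizing u v s
  · have hswap : #{p ∈ s | p.1 ^ k + u = p.2 ^ k + v}
        = #{p ∈ s.map (Equiv.prodComm ℕ ℕ).toEmbedding | p.1 ^ k + v = p.2 ^ k + u} := by
      rw [filter_map, card_map]
      congr 1
      exact filter_congr fun p _ => by simp [eq_comm]
    rw [hswap, Nat.dist_comm]
    exact this huv.symm _ (by omega)
  have hlt : ∀ p ∈ {p ∈ s | p.1 ^ k + u = p.2 ^ k + v}, p.2 < p.1 := by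
    intro p hp
    have := (mem_filter.1 hp).2
    by_contra! hle
    have := Nat.pow_le_pow_left hle k
    omega
  rw [Nat.dist_eq_sub_of_le h.le]
  refine card_le_card_of_injOn (fun p => p.1 - p.2) (fun p hp => ?_) (fun p hp p' hp' he => ?_)
  · have := (mem_filter.1 hp).2
    refine Nat.mem_divisors.2 ⟨?_, by omega⟩
    have : p.1 ^ k - p.2 ^ k = v - u := by omega
    exact this ▸ Nat.sub_dvd_pow_sub_pow _ _ k
  · have h₁ := hlt p hp
    have h₂ := hlt p' hp'
    have hp := (mem_filter.1 hp).2
    have hp' := (mem_filter.1 hp').2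
    simp only at he
    set e := p.1 - p.2
    have hc : p.2 = p'.2 := (strictMono_add_pow_sub_pow hk (Nat.sub_pos_of_lt h₁)).injective <| by
      rw [show p.2 + e = p.1 by omega, show p'.2 + e = p'.1 by omega]
      omega
    exact Prod.ext (by omega) hc

lemma card_filter_pow_add_eq_pow_add_le_add_rpow {k : ℕ} {C δ : ℝ} (hk : 2 ≤ k) (hδ : 0 ≤ δ)
    (hC : IsDivisorBound C δ) {N n u v : ℕ} (hu : u ≤ n) (hv : v ≤ n) :
    (#{p ∈ Icc 1 N ×ˢ Icc 1 N | p.1 ^ k + u = p.2 ^ k + v ∧ p.1 ^ k + u ≤ n} : ℝ)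
      ≤ (if u = v then (n : ℝ) ^ (k : ℝ)⁻¹ else 0) + C * (n : ℝ) ^ δ := by
  split_ifs with huv
  · subst huv
    calc _ ≤ (#{x ∈ Icc 1 N | x ^ k ≤ n} : ℝ) := by
          refine Nat.cast_le.2 (card_le_card_of_injOn Prod.fst (fun p hp => ?_)
            fun p hp p' hp' h => ?_)
          · simp only [mem_coe, mem_filter, mem_product] at hp ⊢
            exact ⟨hp.1.1, by omega⟩
          · simp only [mem_coe, mem_filter] at hp hp'
            have h₁ := Nat.pow_left_injective (by omega) (Nat.add_right_cancel hp.2.1)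
            have h₂ := Nat.pow_left_injective (by omega) (Nat.add_right_cancel hp'.2.1)
            exact Prod.ext h (by rw [← h₁, ← h₂, h])
      _ ≤ (n : ℝ) ^ (k : ℝ)⁻¹ := card_filter_pow_le_le_rpow (by omega) N n
      _ ≤ _ := le_add_of_nonneg_right (mul_nonneg hC.nonneg (by positivity))
  · calc _ ≤ (#(Nat.dist u v).divisors : ℝ) := by
          have hsub : {p ∈ Icc 1 N ×ˢ Icc 1 N | p.1 ^ k + u = p.2 ^ k + v ∧ p.1 ^ k + u ≤ n}
              ⊆ {p ∈ Icc 1 N ×ˢ Icc 1 N | p.1 ^ k + u = p.2 ^ k + v} :=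
            monotone_filter_right _ fun _ _ hp => hp.1
          exact_mod_cast (card_le_card hsub).trans
            (card_filter_pow_add_eq_pow_add_le_card_divisors hk huv _)
      _ ≤ C * (Nat.dist u v : ℝ) ^ δ := hC _
      _ ≤ C * (n : ℝ) ^ δ := by
          gcongr
          · exact hC.nonneg
          · exact_mod_cast (show Nat.dist u v ≤ n by unfold Nat.dist; omega)
      _ = _ := (zero_add _).symm

/-- The representations counted by `r(m)`, restricted to `1 ≤ x, y ≤ N`. -/
def powSumReps (k₁ k₂ N m : ℕ) : Finset (ℕ × ℕ) :=
  {p ∈ Icc 1 N ×ˢ Icc 1 N | p.1 ^ k₁ + p.2 ^ k₂ = m}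

lemma card_powSumReps_comm (k₁ k₂ N m : ℕ) :
    #(powSumReps k₁ k₂ N m) = #(powSumReps k₂ k₁ N m) := by
  refine card_nbij' Prod.swap Prod.swap ?_ ?_ (fun _ _ => rfl) (fun _ _ => rfl) <;>
  · intro p hp
    simp only [powSumReps, mem_coe, mem_filter, mem_product, Prod.fst_swap, Prod.snd_swap] at hp ⊢
    exact ⟨hp.1.symm, by omega⟩

lemma sum_sq_card_powSumReps_le_of_two_le {k₁ k₂ : ℕ} {C δ : ℝ} (hk₁ : 2 ≤ k₁) (hk₂ : k₂ ≠ 0)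
    (hδ : 0 ≤ δ) (hC : IsDivisorBound C δ) (N n : ℕ) :
    ((∑ m ∈ range (n + 1), #(powSumReps k₁ k₂ N m) ^ 2 : ℕ) : ℝ) ≤
      (n : ℝ) ^ (k₁ : ℝ)⁻¹ * (n : ℝ) ^ (k₂ : ℝ)⁻¹
        + (n : ℝ) ^ (k₂ : ℝ)⁻¹ * (n : ℝ) ^ (k₂ : ℝ)⁻¹ * (C * (n : ℝ) ^ δ) := by
  unfold powSumReps
  rw [sum_sq_card_filter_eq_card_filter_product]
  set B := {b ∈ Icc 1 N | b ^ k₂ ≤ n}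
  rw [card_eq_sum_card_fiberwise (f := fun q => (q.1.2, q.2.2)) (t := B ×ˢ B) ?maps]
  case maps =>
    intro q hq
    simp only [mem_coe, mem_filter, mem_product, mem_range, B] at hq ⊢
    exact ⟨⟨hq.1.1.2, by omega⟩, hq.1.2.2, by omega⟩
  push_cast
  refine (sum_le_sum (g := fun bd : ℕ × ℕ =>
    (if bd.1 = bd.2 then (n : ℝ) ^ (k₁ : ℝ)⁻¹ else 0) + C * (n : ℝ) ^ δ) ?_).trans ?_
  · rintro ⟨b, d⟩ hbd
    simp only [mem_product, mem_filter, B] at hbd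
    have hbound :=
      card_filter_pow_add_eq_pow_add_le_add_rpow hk₁ hδ hC (N := N) hbd.1.2 hbd.2.2
    simp only [(Nat.pow_left_injective hk₂).eq_iff] at hbound
    refine le_trans (Nat.cast_le.2 (card_le_card_of_injOn (fun q => (q.1.1, q.2.1)) ?_ ?_)) hbound
    · intro q hq
      simp only [mem_coe, mem_filter, mem_product, mem_range, Prod.mk.injEq] at hq ⊢
      obtain ⟨⟨⟨⟨ha, -⟩, hc, -⟩, he, hn⟩, rfl, rfl⟩ := hq
      exact ⟨⟨ha, hc⟩, he, by omega⟩
    · intro q hq q' hq' h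
      simp only [mem_coe, mem_filter, Prod.mk.injEq] at hq hq' h
      ext <;> simp only [h.1, h.2, hq.2.1, hq.2.2, hq'.2.1, hq'.2.2]
  have hB := card_filter_pow_le_le_rpow hk₂ N n
  have hC₀ := hC.nonneg
  calc _ = #B * (n : ℝ) ^ (k₁ : ℝ)⁻¹ + #B * #B * (C * (n : ℝ) ^ δ) := by
        rw [sum_add_distrib, sum_product, sum_const, card_product]
        simp
    _ ≤ _ := by
        rw [mul_comm _ ((n : ℝ) ^ (k₂ : ℝ)⁻¹)]
        gcongr

lemma sum_sq_card_powSumReps_le {k₁ k₂ : ℕ} {C δ : ℝ} (hk₁ : 2 ≤ k₁) (hk₂ : 2 ≤ k₂)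
    (hδ : 0 ≤ δ) (hC : IsDivisorBound C δ) (N : ℕ) {n : ℕ} (hn : 1 ≤ n) :
    ((∑ m ∈ range (n + 1), #(powSumReps k₁ k₂ N m) ^ 2 : ℕ) : ℝ) ≤
      (1 + C) * (n : ℝ) ^ ((k₁ : ℝ)⁻¹ + (k₂ : ℝ)⁻¹ + δ) := by
  wlog h : k₁ ≤ k₂ generalizing k₁ k₂
  · simp_rw [card_powSumReps_comm k₁, add_comm (k₁ : ℝ)⁻¹]
    exact this hk₂ hk₁ (by omega)
  have hn' : (1 : ℝ) ≤ n := by exact_mod_cast hn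
  have hC₀ := hC.nonneg
  have hk : (n : ℝ) ^ (k₂ : ℝ)⁻¹ ≤ (n : ℝ) ^ (k₁ : ℝ)⁻¹ :=
    Real.rpow_le_rpow_of_exponent_le hn' (by gcongr)
  have hδ' : 1 ≤ (n : ℝ) ^ δ := Real.one_le_rpow hn' hδ
  calc _ ≤ (n : ℝ) ^ (k₁ : ℝ)⁻¹ * (n : ℝ) ^ (k₂ : ℝ)⁻¹
        + (n : ℝ) ^ (k₂ : ℝ)⁻¹ * (n : ℝ) ^ (k₂ : ℝ)⁻¹ * (C * (n : ℝ) ^ δ) :=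
        sum_sq_card_powSumReps_le_of_two_le hk₁ (by omega) hδ hC N n
    _ ≤ (n : ℝ) ^ (k₁ : ℝ)⁻¹ * (n : ℝ) ^ (k₂ : ℝ)⁻¹ * (n : ℝ) ^ δ
        + (n : ℝ) ^ (k₁ : ℝ)⁻¹ * (n : ℝ) ^ (k₂ : ℝ)⁻¹ * (C * (n : ℝ) ^ δ) :=
        add_le_add (le_mul_of_one_le_right (by positivity) hδ') (by gcongr)
    _ = _ := by rw [Real.rpow_add (by positivity), Real.rpow_add (by positivity)]; ring

lemma ncard_solutions_eq_sum_card_powSumReps {k₁ k₂ k₃ : ℕ} (hk₁ : k₁ ≠ 0) (hk₂ : k₂ ≠ 0)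
    (hk₃ : k₃ ≠ 0) (n : ℕ) :
    {x : ℕ × ℕ × ℕ | 0 < x.1 ∧ 0 < x.2.1 ∧ 0 < x.2.2 ∧
        x.1 ^ k₁ + x.2.1 ^ k₂ + x.2.2 ^ k₃ = n}.ncard
      = ∑ z ∈ Icc 1 n with z ^ k₃ ≤ n, #(powSumReps k₁ k₂ n (n - z ^ k₃)) := by
  rw [← card_sigma, ← Set.ncard_coe_finset]
  refine Set.ncard_congr (fun x _ => ⟨x.2.2, (x.1, x.2.1)⟩) ?_ ?_ ?_
  · rintro ⟨a, b, c⟩ ⟨ha, hb, hc, he⟩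
    dsimp only at ha hb hc he
    have := Nat.le_self_pow hk₁ a
    have := Nat.le_self_pow hk₂ b
    have := Nat.le_self_pow hk₃ c
    simp only [coe_sigma, Set.mem_sigma_iff, mem_coe, mem_filter, mem_Icc, powSumReps,
      mem_product]
    omega
  · rintro ⟨a, b, c⟩ ⟨a', b', c'⟩ - - h
    simp only [Sigma.mk.injEq, heq_eq_eq, Prod.mk.injEq] at h
    simp only [h]
  · rintro ⟨z, a, b⟩ h
    simp only [coe_sigma, Set.mem_sigma_iff, mem_coe, mem_filter, mem_Icc, powSumReps,
      mem_product] at h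
    exact ⟨(a, b, z), by simp only [Set.mem_ofPred_eq]; omega, rfl⟩

lemma ncard_solutions_sq_le {k₁ k₂ k₃ : ℕ} {C δ : ℝ} (hk₁ : 2 ≤ k₁) (hk₂ : 2 ≤ k₂)
    (hk₃ : k₃ ≠ 0) (hδ : 0 ≤ δ) (hC : IsDivisorBound C δ) {n : ℕ} (hn : 1 ≤ n) :
    ({x : ℕ × ℕ × ℕ | 0 < x.1 ∧ 0 < x.2.1 ∧ 0 < x.2.2 ∧
        x.1 ^ k₁ + x.2.1 ^ k₂ + x.2.2 ^ k₃ = n}.ncard : ℝ) ^ 2 ≤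
      (1 + C) * (n : ℝ) ^ ((k₁ : ℝ)⁻¹ + (k₂ : ℝ)⁻¹ + (k₃ : ℝ)⁻¹ + δ) := by
  have hinj : Set.InjOn (fun z => n - z ^ k₃) ({z ∈ Icc 1 n | z ^ k₃ ≤ n} : Finset ℕ) := by
    intro z hz z' hz' h
    rw [mem_coe, mem_filter] at hz hz'
    dsimp only at h
    exact Nat.pow_left_injective hk₃ (show z ^ k₃ = z' ^ k₃ by omega)
  have hmaps : ∀ z ∈ {z ∈ Icc 1 n | z ^ k₃ ≤ n}, n - z ^ k₃ ∈ range (n + 1) :=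
    fun z _ => mem_range.2 (by omega)
  have henergy := sum_sq_card_powSumReps_le hk₁ hk₂ hδ hC n hn
  push_cast at henergy
  rw [ncard_solutions_eq_sum_card_powSumReps (by omega) (by omega) hk₃, Nat.cast_sum]
  calc _ ≤ #{z ∈ Icc 1 n | z ^ k₃ ≤ n}
        * ∑ m ∈ range (n + 1), (#(powSumReps k₁ k₂ n m) : ℝ) ^ 2 :=
        sq_sum_comp_le_card_mul_sum_sq hinj hmaps (fun m => (#(powSumReps k₁ k₂ n m) : ℝ))
    _ ≤ (n : ℝ) ^ (k₃ : ℝ)⁻¹ * ((1 + C) * (n : ℝ) ^ ((k₁ : ℝ)⁻¹ + (k₂ : ℝ)⁻¹ + δ)) := by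
        gcongr
        exact card_filter_pow_le_le_rpow hk₃ n n
    _ = _ := by
        rw [show (k₁ : ℝ)⁻¹ + (k₂ : ℝ)⁻¹ + (k₃ : ℝ)⁻¹ + δ
            = (k₃ : ℝ)⁻¹ + ((k₁ : ℝ)⁻¹ + (k₂ : ℝ)⁻¹ + δ) by ring,
          Real.rpow_add (by positivity) (k₃ : ℝ)⁻¹]
        ring

theorem stmt_14 (k₁ k₂ k₃ : ℕ) (hk₁ : 2 ≤ k₁) (hk₂ : 2 ≤ k₂) (hk₃ : 0 < k₃) :
    ∀ ε : ℝ, 0 < ε → ∃ C : ℝ, 0 < C ∧ ∀ n : ℕ, 1 ≤ n →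
      (({x : ℕ × ℕ × ℕ | 0 < x.1 ∧ 0 < x.2.1 ∧ 0 < x.2.2 ∧
            x.1 ^ k₁ + x.2.1 ^ k₂ + x.2.2 ^ k₃ = n}.ncard : ℝ)) ≤
        C * (n : ℝ) ^ ((1 / 2) * (1 / (k₁ : ℝ) + 1 / (k₂ : ℝ) + 1 / (k₃ : ℝ)) + ε) := by
  intro ε hε
  obtain ⟨C, hC⟩ := exists_isDivisorBound (by positivity : 0 < 2 * ε)
  have hC₀ := hC.nonneg
  refine ⟨√(1 + C), by positivity, fun n hn => ?_⟩
  have hsq := ncard_solutions_sq_le hk₁ hk₂ hk₃.ne' (by positivity) hC hn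
  rw [← pow_le_pow_iff_left₀ (by positivity) (by positivity) two_ne_zero, mul_pow,
    Real.sq_sqrt (by positivity), ← Real.rpow_mul_natCast (by positivity)]
  refine hsq.trans_eq (congrArg _ (congrArg _ ?_))
  push_cast
  ring
end

section
/- Let s ≥ 2 and let a_1, …, a_s be positive integers with gcd(a_1, …, a_s) = 1. For n ≥ 1 let R⁺(n) denote the number of s-tuples of positive integers (x_1, …, x_s) with a_1x_1 + … + a_sx_s = n. Then R⁺(n) is asymptotic to n^{s−1} / ( (s−1)! · a_1 a_2 ⋯ a_s ) as n → ∞; that is, lim_{n→∞} R⁺(n) · (s−1)! · a_1 ⋯ a_s / n^{s−1} = 1. -/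
/-!
Write `N(m)` for the number of solutions of `∑ aᵢ xᵢ = m` in nonnegative integers and
`T(n) = ∑_{m ≤ n} N(m)`. Writing `zᵢ = aᵢ xᵢ + rᵢ` with `0 ≤ rᵢ < aᵢ` compares `T(n) ∏ aᵢ` with
the number of lattice points of a standard simplex, which gives
`nˢ ≤ s! T(n) ∏ aᵢ ≤ (n + ∑ aᵢ)ˢ`. Since the `aᵢ` are coprime, every `c ≥ B` is a nonnegative
combination of them, so adding a representation of `m' - m` shows `N(m) ≤ N(m')` whenever
`m + B ≤ m'`. Thus `k N(ν)` is squeezed between the increments of `T` over two windows of length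
`k` lying `B` below and above `ν`, and the estimate for `T` puts `(s-1)! ∏ aᵢ N(ν) / ν^(s-1)`
within `∑ aᵢ / k + o(1)` of `1`; now let `k → ∞`. Positive solutions for `n` are nonnegative
solutions for `n - ∑ aᵢ`.
-/

open Finset Filter Topology
open scoped Nat

lemma card_piAntidiag_univ {ι : Type*} [Fintype ι] [DecidableEq ι] (n : ℕ) :
    #(piAntidiag (univ : Finset ι) n) = (Fintype.card ι + n - 1).choose n := by
  rw [← map_sym_eq_piAntidiag, card_map, sym_univ, card_univ, Sym.card_sym_eq_choose]

lemma tendsto_of_forall_eventually_bounds {α β : Type*} {F : Filter α} {G : Filter β} [G.NeBot]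
    {f : α → ℝ} {L : ℝ} {δ : β → ℝ} {l u : β → α → ℝ} (hδ : Tendsto δ G (𝓝 0))
    (hl : ∀ k, Tendsto (l k) F (𝓝 (L - δ k))) (hu : ∀ k, Tendsto (u k) F (𝓝 (L + δ k)))
    (hfl : ∀ᶠ k in G, ∀ᶠ x in F, l k x ≤ f x) (hfu : ∀ᶠ k in G, ∀ᶠ x in F, f x ≤ u k x) :
    Tendsto f F (𝓝 L) := by
  refine tendsto_order.2 ⟨fun b hb ↦ ?_, fun b hb ↦ ?_⟩
  · have hδb : ∀ᶠ k in G, b < L - δ k :=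
      (tendsto_order.1 (by simpa using hδ.const_sub L)).1 b hb
    obtain ⟨k, hbk, hk⟩ := (hδb.and hfl).exists
    filter_upwards [(tendsto_order.1 (hl k)).1 b hbk, hk] with x h1 h2 using h1.trans_le h2
  · have hδb : ∀ᶠ k in G, L + δ k < b :=
      (tendsto_order.1 (by simpa using hδ.const_add L)).2 b hb
    obtain ⟨k, hbk, hk⟩ := (hδb.and hfu).exists
    filter_upwards [(tendsto_order.1 (hu k)).2 b hbk, hk] with x h1 h2 using h2.trans_lt h1

lemma tendsto_comp_sub_div_pow {F : ℕ → ℝ} {L : ℝ} {p : ℕ}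
    (h : Tendsto (fun n : ℕ ↦ F n / n ^ p) atTop (𝓝 L)) (c : ℕ) :
    Tendsto (fun n : ℕ ↦ F (n - c) / n ^ p) atTop (𝓝 L) := by
  have hratio : Tendsto (fun n : ℕ ↦ (1 - c / n : ℝ) ^ p) atTop (𝓝 1) := by
    simpa using ((tendsto_const_div_atTop_nhds_zero_nat (c : ℝ)).const_sub 1).pow p
  refine (by simpa using (h.comp (tendsto_sub_atTop_nat c)).mul hratio :
    Tendsto (fun n : ℕ ↦ F (n - c) / ((n - c : ℕ) : ℝ) ^ p * (1 - c / n : ℝ) ^ p) atTop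
      (𝓝 L)).congr' ?_
  filter_upwards [eventually_gt_atTop c] with n hn
  have hn0 : (n : ℝ) ≠ 0 := Nat.cast_ne_zero.2 (by omega)
  have hnc : (n : ℝ) - c ≠ 0 := sub_ne_zero.2 (by exact_mod_cast hn.ne')
  rw [Nat.cast_sub hn.le, one_sub_div hn0, div_pow]
  field_simp

namespace LinearDiophantine

variable {ι : Type*} [Fintype ι] [DecidableEq ι] {a : ι → ℕ} {n : ℕ}

def RepresentsFrom (a : ι → ℕ) (B : ℕ) : Prop :=
  ∀ c, B ≤ c → ∃ y : ι → ℕ, ∑ i, a i * y i = c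

/-- The box `x i ≤ n` only serves to make these finite sets; it cuts nothing off when all
`a i` are positive. -/
def level (a : ι → ℕ) (n : ℕ) : Finset (ι → ℕ) :=
  {x ∈ Fintype.piFinset fun _ ↦ range (n + 1) | ∑ i, a i * x i = n}

def sublevel (a : ι → ℕ) (n : ℕ) : Finset (ι → ℕ) :=
  {x ∈ Fintype.piFinset fun _ ↦ range (n + 1) | ∑ i, a i * x i ≤ n}

omit [DecidableEq ι] in
lemma le_of_sum_mul_le (ha : ∀ i, 0 < a i) {x : ι → ℕ} (h : ∑ i, a i * x i ≤ n) (i : ι) :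
    x i ≤ n :=
  (Nat.le_mul_of_pos_left _ (ha i)).trans
    ((single_le_sum (f := fun j ↦ a j * x j) (fun _ _ ↦ Nat.zero_le _) (mem_univ i)).trans h)

lemma mem_sublevel (ha : ∀ i, 0 < a i) {x : ι → ℕ} :
    x ∈ sublevel a n ↔ ∑ i, a i * x i ≤ n := by
  simp only [sublevel, mem_filter, Fintype.mem_piFinset, mem_range, Nat.lt_succ_iff,
    and_iff_right_iff_imp]
  exact le_of_sum_mul_le ha

lemma mem_level (ha : ∀ i, 0 < a i) {x : ι → ℕ} : x ∈ level a n ↔ ∑ i, a i * x i = n := by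
  simp only [level, mem_filter, Fintype.mem_piFinset, mem_range, Nat.lt_succ_iff,
    and_iff_right_iff_imp]
  exact fun h ↦ le_of_sum_mul_le ha h.le

lemma card_sublevel (ha : ∀ i, 0 < a i) (n : ℕ) :
    #(sublevel a n) = ∑ m ∈ range (n + 1), #(level a m) := by
  have hmaps : Set.MapsTo (fun x : ι → ℕ ↦ ∑ i, a i * x i) (sublevel a n) (range (n + 1)) :=
    fun x hx ↦ mem_range.2 <| Nat.lt_succ_of_le <| (mem_sublevel ha).1 hx
  rw [card_eq_sum_card_fiberwise hmaps]
  refine sum_congr rfl fun m hm ↦ congrArg card (ext fun x ↦ ?_)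
  have := mem_range.1 hm
  simp only [mem_filter, mem_sublevel ha, mem_level ha]
  omega

lemma level_one (n : ℕ) : level (fun _ : ι ↦ 1) n = piAntidiag univ n := by
  ext x
  simp [mem_level fun _ ↦ one_pos, mem_piAntidiag]

lemma card_sublevel_one [Nonempty ι] (n : ℕ) :
    #(sublevel (fun _ : ι ↦ 1) n) = (n + Fintype.card ι).choose (Fintype.card ι) := by
  obtain ⟨p, hp⟩ : ∃ p, Fintype.card ι = p + 1 :=
    Nat.exists_eq_succ_of_ne_zero Fintype.card_ne_zero
  rw [card_sublevel fun _ ↦ one_pos, hp, ← add_assoc, ← Nat.sum_range_add_choose]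
  refine sum_congr rfl fun m _ ↦ ?_
  rw [level_one, card_piAntidiag_univ, hp, Nat.succ_add_sub_one, add_comm p,
    Nat.choose_symm_add]

lemma pow_le_factorial_mul_card_sublevel_one [Nonempty ι] (n : ℕ) :
    n ^ Fintype.card ι ≤ (Fintype.card ι)! * #(sublevel (fun _ : ι ↦ 1) n) := by
  rw [card_sublevel_one, ← Nat.ascFactorial_eq_factorial_mul_choose]
  exact (Nat.pow_le_pow_left n.le_succ _).trans (Nat.pow_succ_le_ascFactorial _ _)

lemma factorial_mul_card_sublevel_one_le [Nonempty ι] (n : ℕ) :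
    (Fintype.card ι)! * #(sublevel (fun _ : ι ↦ 1) n) ≤ (n + Fintype.card ι) ^ Fintype.card ι := by
  rw [card_sublevel_one, ← Nat.ascFactorial_eq_factorial_mul_choose]
  exact Nat.ascFactorial_le_pow_add _ _

lemma card_piFinset_range (a : ι → ℕ) : #(Fintype.piFinset fun i ↦ range (a i)) = ∏ i, a i := by
  simp [Fintype.card_piFinset]

lemma card_sublevel_one_le_card_sublevel_mul_prod (ha : ∀ i, 0 < a i) (n : ℕ) :
    #(sublevel (fun _ : ι ↦ 1) n) ≤ #(sublevel a n) * ∏ i, a i := by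
  rw [← card_piFinset_range, ← card_product]
  refine card_le_card_of_injOn (fun z ↦ (fun i ↦ z i / a i, fun i ↦ z i % a i)) ?_ ?_
  · intro z hz
    simp only [mem_coe, mem_product, mem_sublevel ha, mem_sublevel fun _ ↦ one_pos, one_mul,
      Fintype.mem_piFinset, mem_range] at hz ⊢
    refine ⟨le_trans (sum_le_sum fun i _ ↦ Nat.mul_div_le (z i) (a i)) hz,
      fun i ↦ Nat.mod_lt _ (ha i)⟩
  · intro z _ z' _ h
    simp only [Prod.mk.injEq, funext_iff] at h
    funext i
    rw [← Nat.div_add_mod (z i) (a i), ← Nat.div_add_mod (z' i) (a i), h.1 i, h.2 i]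

lemma card_sublevel_mul_prod_le_card_sublevel_one (ha : ∀ i, 0 < a i) (n : ℕ) :
    #(sublevel a n) * ∏ i, a i ≤ #(sublevel (fun _ : ι ↦ 1) (n + ∑ i, (a i - 1))) := by
  rw [← card_piFinset_range, ← card_product]
  refine card_le_card_of_injOn (fun xr ↦ fun i ↦ a i * xr.1 i + xr.2 i) ?_ ?_
  · rintro ⟨x, r⟩ hxr
    simp only [mem_coe, mem_product, mem_sublevel ha, mem_sublevel fun _ ↦ one_pos, one_mul,
      Fintype.mem_piFinset, mem_range] at hxr ⊢
    rw [sum_add_distrib]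
    exact add_le_add hxr.1 (sum_le_sum fun i _ ↦ Nat.le_sub_one_of_lt (hxr.2 i))
  · rintro ⟨x, r⟩ hxr ⟨x', r'⟩ hxr' h
    simp only [mem_coe, mem_product, Fintype.mem_piFinset, mem_range] at hxr hxr'
    have hdiv : ∀ i, a i * x i + r i = a i * x' i + r' i := fun i ↦ congrFun h i
    have hx : x = x' := funext fun i ↦ by
      simpa [Nat.mul_add_div (ha i), Nat.div_eq_of_lt (hxr.2 i), Nat.div_eq_of_lt (hxr'.2 i)]
        using congrArg (· / a i) (hdiv i)
    subst hx
    simp only [Prod.mk.injEq, true_and]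
    exact funext fun i ↦ by simpa using hdiv i

lemma pow_le_factorial_mul_card_sublevel_mul_prod [Nonempty ι] (ha : ∀ i, 0 < a i) (n : ℕ) :
    n ^ Fintype.card ι ≤ (Fintype.card ι)! * (#(sublevel a n) * ∏ i, a i) :=
  (pow_le_factorial_mul_card_sublevel_one n).trans
    (Nat.mul_le_mul_left _ (card_sublevel_one_le_card_sublevel_mul_prod ha n))

omit [DecidableEq ι] in
lemma sum_sub_one_add_card (ha : ∀ i, 0 < a i) : ∑ i, (a i - 1) + Fintype.card ι = ∑ i, a i := by
  rw [← card_univ, card_eq_sum_ones, ← sum_add_distrib]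
  exact sum_congr rfl fun i _ ↦ Nat.sub_add_cancel (ha i)

lemma factorial_mul_card_sublevel_mul_prod_le [Nonempty ι] (ha : ∀ i, 0 < a i) (n : ℕ) :
    (Fintype.card ι)! * (#(sublevel a n) * ∏ i, a i) ≤ (n + ∑ i, a i) ^ Fintype.card ι := by
  calc (Fintype.card ι)! * (#(sublevel a n) * ∏ i, a i)
      ≤ (Fintype.card ι)! * #(sublevel (fun _ : ι ↦ 1) (n + ∑ i, (a i - 1))) :=
        Nat.mul_le_mul_left _ (card_sublevel_mul_prod_le_card_sublevel_one ha n)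
    _ ≤ (n + ∑ i, a i) ^ Fintype.card ι := by
        rw [← sum_sub_one_add_card ha, ← add_assoc]
        exact factorial_mul_card_sublevel_one_le _

omit [DecidableEq ι] in
lemma exists_representsFrom (hgcd : univ.gcd a = 1) : ∃ B, RepresentsFrom a B := by
  obtain ⟨B, hB⟩ := Nat.exists_mem_closure_of_ge (Set.range a)
  have hdvd : ∀ c, Nat.setGcd (Set.range a) ∣ c := fun c ↦
    (hgcd ▸ dvd_gcd fun i _ ↦ Nat.setGcd_dvd_of_mem (Set.mem_range_self i)).trans (one_dvd c)
  refine ⟨B, fun c hc ↦ ?_⟩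
  obtain ⟨y, hy⟩ := AddSubmonoid.mem_closure_range_iff_of_fintype.1 (hB c hc (hdvd c))
  exact ⟨y, by simp [hy, mul_comm]⟩

lemma card_level_le_card_level_add (ha : ∀ i, 0 < a i) (y : ι → ℕ) (m : ℕ) :
    #(level a m) ≤ #(level a (m + ∑ i, a i * y i)) := by
  refine card_le_card_of_injOn (· + y) (fun x hx ↦ ?_) (add_left_injective y).injOn
  simp only [mem_coe, mem_level ha, Pi.add_apply, mul_add, sum_add_distrib] at hx ⊢
  rw [hx]

lemma card_level_mono (ha : ∀ i, 0 < a i) {B : ℕ} (hB : RepresentsFrom a B) {m m' : ℕ}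
    (h : m + B ≤ m') : #(level a m) ≤ #(level a m') := by
  obtain ⟨y, hy⟩ := hB (m' - m) (by omega)
  simpa [hy, Nat.add_sub_cancel' (show m ≤ m' by omega)] using card_level_le_card_level_add ha y m

lemma card_sublevel_add (ha : ∀ i, 0 < a i) (n k : ℕ) :
    #(sublevel a (n + k)) = #(sublevel a n) + ∑ j ∈ range k, #(level a (n + 1 + j)) := by
  rw [card_sublevel ha, card_sublevel ha, add_right_comm, sum_range_add]

lemma card_sublevel_add_mul_le (ha : ∀ i, 0 < a i) {B : ℕ} (hB : RepresentsFrom a B)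
    {ν n : ℕ} (h : ν + B ≤ n) (k : ℕ) :
    #(sublevel a n) + k * #(level a ν) ≤ #(sublevel a (n + k)) := by
  rw [card_sublevel_add ha]
  gcongr
  simpa using card_nsmul_le_sum (range k) _ _ fun j _ ↦ card_level_mono ha hB (by omega)

lemma card_sublevel_le_add_mul (ha : ∀ i, 0 < a i) {B : ℕ} (hB : RepresentsFrom a B)
    {ν n k : ℕ} (h : n + k + B ≤ ν) :
    #(sublevel a (n + k)) ≤ #(sublevel a n) + k * #(level a ν) := by
  rw [card_sublevel_add ha]
  gcongr
  simpa using sum_le_card_nsmul (range k) _ _ fun j hj ↦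
    card_level_mono ha hB (by have := mem_range.1 hj; omega)

lemma pow_add_mul_card_level_le [Nonempty ι] (ha : ∀ i, 0 < a i) {B : ℕ}
    (hB : RepresentsFrom a B) (k ν : ℕ) :
    (ν + B) ^ Fintype.card ι + k * ((Fintype.card ι)! * (#(level a ν) * ∏ i, a i))
      ≤ (ν + B + k + ∑ i, a i) ^ Fintype.card ι :=
  calc (ν + B) ^ Fintype.card ι + k * ((Fintype.card ι)! * (#(level a ν) * ∏ i, a i))
      ≤ (Fintype.card ι)! * (#(sublevel a (ν + B)) * ∏ i, a i)
          + k * ((Fintype.card ι)! * (#(level a ν) * ∏ i, a i)) := by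
        gcongr
        exact pow_le_factorial_mul_card_sublevel_mul_prod ha _
    _ = (Fintype.card ι)! * (∏ i, a i) * (#(sublevel a (ν + B)) + k * #(level a ν)) := by ring
    _ ≤ (Fintype.card ι)! * (∏ i, a i) * #(sublevel a (ν + B + k)) := by
        gcongr
        exact card_sublevel_add_mul_le ha hB le_rfl k
    _ = (Fintype.card ι)! * (#(sublevel a (ν + B + k)) * ∏ i, a i) := by ring
    _ ≤ (ν + B + k + ∑ i, a i) ^ Fintype.card ι := factorial_mul_card_sublevel_mul_prod_le ha _

lemma pow_le_pow_add_mul_card_level [Nonempty ι] (ha : ∀ i, 0 < a i) {B : ℕ}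
    (hB : RepresentsFrom a B) {k ν n : ℕ} (h : n + k + B ≤ ν) :
    (n + k) ^ Fintype.card ι
      ≤ (n + ∑ i, a i) ^ Fintype.card ι + k * ((Fintype.card ι)! * (#(level a ν) * ∏ i, a i)) :=
  calc (n + k) ^ Fintype.card ι ≤ (Fintype.card ι)! * (#(sublevel a (n + k)) * ∏ i, a i) :=
        pow_le_factorial_mul_card_sublevel_mul_prod ha _
    _ ≤ (Fintype.card ι)! * ((#(sublevel a n) + k * #(level a ν)) * ∏ i, a i) := by
        gcongr
        exact card_sublevel_le_add_mul ha hB h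
    _ = (Fintype.card ι)! * (#(sublevel a n) * ∏ i, a i)
          + k * ((Fintype.card ι)! * (#(level a ν) * ∏ i, a i)) := by ring
    _ ≤ (n + ∑ i, a i) ^ Fintype.card ι + k * ((Fintype.card ι)! * (#(level a ν) * ∏ i, a i)) := by
        gcongr
        exact factorial_mul_card_sublevel_mul_prod_le ha _

lemma card_level_div_pow_le [Nonempty ι] (ha : ∀ i, 0 < a i) {B : ℕ} (hB : RepresentsFrom a B)
    {k ν : ℕ} (hk : 0 < k) (hν : 0 < ν) :
    (#(level a ν) : ℝ) * (Fintype.card ι - 1)! * (∏ i, (a i : ℝ)) / ν ^ (Fintype.card ι - 1)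
      ≤ (1 + (∑ i, (a i : ℝ)) / k) * (1 + (B + k + ∑ i, (a i : ℝ)) / ν) ^ (Fintype.card ι - 1) := by
  obtain ⟨p, hp⟩ : ∃ p, Fintype.card ι = p + 1 :=
    Nat.exists_eq_succ_of_ne_zero Fintype.card_ne_zero
  set A : ℝ := ∑ i, (a i : ℝ)
  set N : ℝ := #(level a ν) * p ! * ∏ i, (a i : ℝ)
  set X : ℝ := ν + B + k + A with hX
  have hA : 0 ≤ A := by positivity
  have hcount : ((ν : ℝ) + B) ^ (p + 1) + (p + 1) * (k * N) ≤ X ^ (p + 1) := by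
    have := (Nat.cast_le (α := ℝ)).2 (pow_add_mul_card_level_le ha hB k ν)
    rw [hp, Nat.factorial_succ] at this
    push_cast at this
    linarith
  have hbern : X ^ (p + 1) ≤ (ν + B) ^ (p + 1) + (p + 1) * ((k + A) * X ^ p) := by
    have := pow_add_mul_le_add_pow (a := X) (b := -(k + A)) (by positivity)
      (by linarith [show (0 : ℝ) ≤ ν + B + k by positivity]) (p + 1)
    rw [Nat.add_sub_cancel, show X + -(k + A) = ν + B by ring] at this
    push_cast at this
    linarith
  have key : k * N ≤ (k + A) * X ^ p :=
    le_of_mul_le_mul_left (by linarith) (by positivity : (0 : ℝ) < p + 1)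
  have hν0 : (0 : ℝ) < ν := by exact_mod_cast hν
  rw [hp, Nat.add_sub_cancel, div_le_iff₀ (by positivity)]
  calc N ≤ (k + A) / k * X ^ p := by rw [div_mul_eq_mul_div, le_div_iff₀ (by positivity)]; linarith
    _ = _ := by
        rw [one_add_div (by positivity), one_add_div hν0.ne', div_pow]
        field_simp
        ring

lemma le_card_level_div_pow [Nonempty ι] (ha : ∀ i, 0 < a i) {B : ℕ} (hB : RepresentsFrom a B)
    {k ν : ℕ} (hk : ∑ i, a i ≤ k) (hν : B + k < ν) :
    (1 - (∑ i, (a i : ℝ)) / k) * (1 - (B + k) / ν) ^ (Fintype.card ι - 1)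
      ≤ (#(level a ν) : ℝ) * (Fintype.card ι - 1)! * (∏ i, (a i : ℝ))
          / ν ^ (Fintype.card ι - 1) := by
  obtain ⟨p, hp⟩ : ∃ p, Fintype.card ι = p + 1 :=
    Nat.exists_eq_succ_of_ne_zero Fintype.card_ne_zero
  set A : ℝ := ∑ i, (a i : ℝ)
  set N : ℝ := #(level a ν) * p ! * ∏ i, (a i : ℝ)
  set n := ν - (B + k) with hn
  have hA : 0 ≤ A := by positivity
  have hAk : A ≤ k := by simp only [A]; exact_mod_cast hk
  have hk0 : (0 : ℝ) < k :=
    (Nat.cast_pos.2 (sum_pos (fun i _ ↦ ha i) univ_nonempty)).trans_le (by exact_mod_cast hk)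
  have hcount : ((n : ℝ) + k) ^ (p + 1) ≤ (n + A) ^ (p + 1) + (p + 1) * (k * N) := by
    have := (Nat.cast_le (α := ℝ)).2 (pow_le_pow_add_mul_card_level ha hB (n := n) (k := k) (ν := ν)
      (by omega))
    rw [hp, Nat.factorial_succ] at this
    push_cast at this
    linarith
  have hbern : (n + A) ^ (p + 1) + (p + 1) * ((k - A) * (n + A) ^ p) ≤ ((n : ℝ) + k) ^ (p + 1) := by
    have := pow_add_mul_le_add_pow (a := (n : ℝ) + A) (b := k - A) (by positivity)
      (by linarith [show (0 : ℝ) ≤ n by positivity]) (p + 1)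
    rw [Nat.add_sub_cancel, add_add_sub_cancel] at this
    push_cast at this
    linarith
  have key : (k - A) * n ^ p ≤ k * N :=
    calc (k - A) * n ^ p ≤ (k - A) * (n + A) ^ p := by gcongr; linarith
      _ ≤ k * N := le_of_mul_le_mul_left (by linarith) (by positivity : (0 : ℝ) < p + 1)
  have hnν : (n : ℝ) = ν - (B + k) := by rw [hn, Nat.cast_sub hν.le]; push_cast; ring
  have hν0 : (0 : ℝ) < ν := by exact_mod_cast (Nat.zero_le _).trans_lt hν
  rw [hp, Nat.add_sub_cancel, le_div_iff₀ (by positivity)]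
  calc (1 - A / k) * (1 - (B + k) / ν) ^ p * ν ^ p = (k - A) / k * n ^ p := by
        rw [hnν, one_sub_div hν0.ne', div_pow, one_sub_div hk0.ne']
        field_simp
    _ ≤ N := by rw [div_mul_eq_mul_div, div_le_iff₀ hk0]; linarith

theorem tendsto_card_level_mul_div_pow (ha : ∀ i, 0 < a i) (hgcd : univ.gcd a = 1) :
    Tendsto (fun ν : ℕ ↦ (#(level a ν) : ℝ) * (Fintype.card ι - 1)! * (∏ i, (a i : ℝ))
      / ν ^ (Fintype.card ι - 1)) atTop (𝓝 1) := by
  have : Nonempty ι := by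
    by_contra h
    simp [not_nonempty_iff.1 h] at hgcd
  obtain ⟨B, hB⟩ := exists_representsFrom hgcd
  set A : ℝ := ∑ i, (a i : ℝ)
  set p := Fintype.card ι - 1
  have hlim_add (C c : ℝ) : Tendsto (fun ν : ℕ ↦ c * (1 + C / ν) ^ p) atTop (𝓝 c) := by
    simpa using (((tendsto_const_div_atTop_nhds_zero_nat C).const_add 1).pow p).const_mul c
  have hlim_sub (C c : ℝ) : Tendsto (fun ν : ℕ ↦ c * (1 - C / ν) ^ p) atTop (𝓝 c) := by
    simpa using (((tendsto_const_div_atTop_nhds_zero_nat C).const_sub 1).pow p).const_mul c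
  refine tendsto_of_forall_eventually_bounds (δ := fun k : ℕ ↦ A / k)
    (l := fun (k ν : ℕ) ↦ (1 - A / k) * (1 - (B + k) / ν) ^ p)
    (u := fun (k ν : ℕ) ↦ (1 + A / k) * (1 + (B + k + A) / ν) ^ p)
    (tendsto_const_div_atTop_nhds_zero_nat A) (fun k ↦ hlim_sub _ _) (fun k ↦ hlim_add _ _) ?_ ?_
  · filter_upwards [eventually_ge_atTop (∑ i, a i)] with k hk
    filter_upwards [eventually_gt_atTop (B + k)] with ν hν
    exact le_card_level_div_pow ha hB hk hν
  · filter_upwards [eventually_gt_atTop 0] with k hk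
    filter_upwards [eventually_gt_atTop 0] with ν hν
    exact card_level_div_pow_le ha hB hk hν

lemma ncard_pos_solutions_eq_card_level (ha : ∀ i, 0 < a i) (hn : ∑ i, a i ≤ n) :
    {x : ι → ℕ | (∀ i, 0 < x i) ∧ ∑ i, a i * x i = n}.ncard = #(level a (n - ∑ i, a i)) := by
  have hshift (y : ι → ℕ) : ∑ i, a i * (y + 1) i = ∑ i, a i * y i + ∑ i, a i := by
    simp [mul_add, sum_add_distrib]
  rw [← card_map ⟨(· + 1), add_left_injective 1⟩, ← Set.ncard_coe_finset]
  congr 1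
  ext x
  simp only [Set.mem_ofPred_eq, coe_map, Function.Embedding.coeFn_mk, Set.mem_image, mem_coe,
    mem_level ha]
  constructor
  · rintro ⟨hx, rfl⟩
    refine ⟨x - 1, ?_, funext fun i ↦ Nat.sub_add_cancel (hx i)⟩
    have := hshift (x - 1)
    rw [tsub_add_cancel_of_le fun i ↦ hx i] at this
    omega
  · rintro ⟨y, hy, rfl⟩
    exact ⟨fun i ↦ Nat.succ_pos _, by rw [hshift]; omega⟩

end LinearDiophantine

open LinearDiophantine in
theorem stmt_17_general (s : ℕ) (a : Fin s → ℕ) (ha : ∀ i, 0 < a i)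
    (hgcd : Finset.univ.gcd a = 1) :
    Filter.Tendsto
      (fun n : ℕ =>
        ({x : Fin s → ℕ | (∀ i, 0 < x i) ∧ ∑ i, a i * x i = n}.ncard : ℝ) *
          (Nat.factorial (s - 1)) * (∏ i, (a i : ℝ)) / (n : ℝ) ^ (s - 1))
      Filter.atTop (nhds 1) := by
  have h := tendsto_comp_sub_div_pow
    (by simpa using tendsto_card_level_mul_div_pow ha hgcd) (∑ i, a i)
  refine h.congr' ?_
  filter_upwards [eventually_ge_atTop (∑ i, a i)] with n hn
  rw [ncard_pos_solutions_eq_card_level ha hn]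

theorem stmt_17 (s : ℕ) (hs : 2 ≤ s) (a : Fin s → ℕ) (ha : ∀ i, 0 < a i)
    (hgcd : Finset.univ.gcd a = 1) :
    Filter.Tendsto
      (fun n : ℕ =>
        ({x : Fin s → ℕ | (∀ i, 0 < x i) ∧ ∑ i, a i * x i = n}.ncard : ℝ) *
          (Nat.factorial (s - 1)) * (∏ i, (a i : ℝ)) / (n : ℝ) ^ (s - 1))
      Filter.atTop (nhds 1) :=
  stmt_17_general s a ha hgcd
end
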